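/- For any integers m ≥ l ≥ 0 and n ≥ 0, Σ_{k=0}^n C(n,k)/C(n+m, k+l) = (n+m+1)/((m+1)·C(m,l)). -/

import Mathlib

/-!
Write `S(n, m, l) = ∑_{k ≤ n} C(n,k) / C(n+m, k+l)`. Pascal's rule in the numerator gives
`S(n+1, m, l) = S(n, m+1, l+1) + S(n, m+1, l)`, so by induction on `n` the identity reduces to
`1/C(m+1,l) + 1/C(m+1,l+1) = (m+2)/((m+1) C(m,l))`, which follows from
`(m+1) C(m,l) = (m+1-l) C(m+1,l) = (l+1) C(m+1,l+1)`.
-/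

open Finset

theorem sum_choose_div_choose_succ {K : Type*} [DivisionRing K] (n m l : ℕ) :
    ∑ k ∈ range (n + 2), ((n + 1).choose k : K) / (n + 1 + m).choose (k + l)
      = ∑ k ∈ range (n + 1), (n.choose k : K) / (n + (m + 1)).choose (k + (l + 1))
        + ∑ k ∈ range (n + 1), (n.choose k : K) / (n + (m + 1)).choose (k + l) := by
  have hshift : ∑ k ∈ range (n + 1), (n.choose k : K) / (n + (m + 1)).choose (k + l)
      = ∑ k ∈ range (n + 1), (n.choose (k + 1) : K) / (n + (m + 1)).choose (k + 1 + l)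
        + 1 / (n + (m + 1)).choose l := by
    rw [sum_range_succ' _ n, sum_range_succ _ n, Nat.choose_succ_self]
    simp
  rw [hshift, sum_range_succ', ← add_assoc, ← sum_add_distrib, add_assoc n 1 m, add_comm 1 m]
  simp only [Nat.choose_succ_succ', Nat.cast_add, add_div, Nat.choose_zero_right, Nat.cast_one,
    zero_add, add_right_comm _ 1 l, add_assoc _ l 1]

variable {K : Type*} [Field K] [CharZero K]

theorem inv_cast_choose_succ {m l : ℕ} (hlm : l ≤ m) :
    ((m + 1).choose l : K)⁻¹ = ((m : K) + 1 - l) / ((m + 1) * m.choose l) := by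
  have hpos : ((m + 1).choose l : K) ≠ 0 := by exact_mod_cast (Nat.choose_pos (by omega)).ne'
  have h := Nat.choose_mul_succ_eq m l
  rw [← Nat.cast_inj (R := K)] at h
  push_cast [Nat.cast_sub (show l ≤ m + 1 by omega)] at h
  have hsub : (m : K) + 1 - l ≠ 0 := by
    rw [← Nat.cast_succ, ← Nat.cast_sub (by omega)]
    exact_mod_cast (show m + 1 - l ≠ 0 by omega)
  rw [mul_comm _ (m.choose l : K), h]
  field_simp

theorem inv_cast_choose_succ_succ {m l : ℕ} (hlm : l ≤ m) :
    ((m + 1).choose (l + 1) : K)⁻¹ = ((l : K) + 1) / ((m + 1) * m.choose l) := by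
  have hpos : ((m + 1).choose (l + 1) : K) ≠ 0 := by
    exact_mod_cast (Nat.choose_pos (by omega)).ne'
  have h := Nat.add_one_mul_choose_eq m l
  rw [← Nat.cast_inj (R := K)] at h
  push_cast at h
  rw [h]
  field_simp

theorem inv_cast_choose_succ_add_inv_cast_choose_succ_succ {m l : ℕ} (hlm : l ≤ m) :
    ((m + 1).choose l : K)⁻¹ + ((m + 1).choose (l + 1) : K)⁻¹
      = ((m : K) + 2) / ((m + 1) * m.choose l) := by
  rw [inv_cast_choose_succ hlm, inv_cast_choose_succ_succ hlm, ← add_div]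
  ring_nf

theorem sum_choose_div_choose_eq {m l : ℕ} (hlm : l ≤ m) (n : ℕ) :
    ∑ k ∈ range (n + 1), (n.choose k : K) / (n + m).choose (k + l)
      = ((n : K) + m + 1) / ((m + 1) * m.choose l) := by
  induction n generalizing m l with
  | zero =>
    have : (m.choose l : K) ≠ 0 := by exact_mod_cast (Nat.choose_pos hlm).ne'
    simp only [zero_add, range_one, sum_singleton, Nat.choose_self, Nat.cast_one, one_div,
      CharP.cast_eq_zero]
    field_simp
  | succ n ih =>
    rw [sum_choose_div_choose_succ, ih (by omega : l + 1 ≤ m + 1), ih (by omega : l ≤ m + 1)]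
    have hm : (m : K) + 2 ≠ 0 := by exact_mod_cast (show m + 2 ≠ 0 by omega)
    have hc : (m.choose l : K) ≠ 0 := by exact_mod_cast (Nat.choose_pos hlm).ne'
    calc _ = ((n : K) + m + 2) / (m + 2)
          * (((m + 1).choose l : K)⁻¹ + ((m + 1).choose (l + 1) : K)⁻¹) := by
          push_cast; simp only [div_eq_mul_inv, mul_inv]; ring
      _ = _ := by
          rw [inv_cast_choose_succ_add_inv_cast_choose_succ_succ hlm]
          field_simp
          push_cast
          ring

/-- **A binomial coefficient identity** (Lemma 3.1 of Chatterjee, "Central limit theorem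
for the free energy of the random field Ising model"): for integers `m ≥ l ≥ 0` and
`n ≥ 0`, `∑_{k=0}^n C(n,k)/C(n+m,k+l) = (n+m+1)/((m+1) C(m,l))`. -/
theorem sum_choose_div_choose (m l n : ℕ) (hlm : l ≤ m) :
    ∑ k ∈ Finset.range (n + 1), (n.choose k : ℝ) / ((n + m).choose (k + l) : ℝ)
      = ((n : ℝ) + m + 1) / ((m + 1) * (m.choose l : ℝ)) :=
  sum_choose_div_choose_eq hlm n
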